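/- arXiv:1107.2694 — 2 statements merged into one kernel-verified Lean document; each statement's English description precedes it below -/
import Mathlib

section
/- Let k be a positive integer, α ∈ (0,1], (a,b) ⊆ ℝ an interval, f : (a,b) → ℝ continuous, and g ∈ C^{k,α}((a,b)). Assume |f(x)|^{k+α} = |g(x)| for every x ∈ (a,b) and g(x)·g'(x) ≠ 0 for every x ∈ (a,b). Set H = Höld_α(g^{(k)}, (a,b)) and ‖g'‖_∞ = ‖g'‖_{L^∞((a,b))}. Then f is differentiable on (a,b) and there exists a constant C₁(k), depending only on k, such that for every x ∈ (a,b): |f'(x)|^{k+α} ≤ C₁(k) · max{ H, ‖g'‖_∞ · [ (b-a) / ((x-a)(b-x)) ]^{k+α-1} }. -/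
/-!
Write `m = k + α`. Since `g` and `g'` do not vanish, `|g|` is monotone and
`f = ±|g| ^ (1/m)`, so `|f'| ^ m ≤ |g'| ^ m * |g| ^ (1 - m)`. The heart of the matter is the bound
`t * |g' x| ≤ K * (|g x| + H * t ^ m)` at every scale `t` below the distance from `x` to the
boundary: a finite-difference formula that is exact on polynomials of degree `k` recovers
`t * g' x` from the values of `g` at `k + 1` equally spaced nodes on the side where `|g|`
decreases (so all these values are at most `|g x|`), up to the Taylor remainder of order `k`,
which the Hölder condition bounds by `H * t ^ m`. Taking `t` of the order of the distance to the
boundary, or `t = (|g x| / H) ^ (1/m)` when that is smaller, gives the two terms of the maximum.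
-/

open Set Finset Nat

theorem exists_sum_mul_pow_eq {K : Type*} [Field K] {n : ℕ} {v : Fin n → K}
    (hv : Function.Injective v) (e : ℕ → K) :
    ∃ c : Fin n → K, ∀ i < n, ∑ j, c j * v j ^ i = e i := by
  have hV : IsUnit (Matrix.vandermonde v).transpose := by
    rw [Matrix.isUnit_iff_isUnit_det, Matrix.det_transpose, isUnit_iff_ne_zero]
    exact Matrix.det_vandermonde_ne_zero_iff.mpr hv
  obtain ⟨c, hc⟩ := Matrix.mulVec_surjective_iff_isUnit.mpr hV fun i => e i
  refine ⟨c, fun i hi => ?_⟩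
  simpa [Matrix.mulVec, dotProduct, Matrix.vandermonde_apply, mul_comm] using
    congrFun hc ⟨i, hi⟩

theorem abs_sub_taylor_le_of_holder {g : ℝ → ℝ} {s : Set ℝ} {k : ℕ} {H α x y : ℝ}
    (hs : IsOpen s) (hg : ContDiffOn ℝ (k : ℕ∞) g s) (hxy : uIcc x y ⊆ s) (hH : 0 ≤ H)
    (hα : 0 ≤ α)
    (hHol : ∀ z ∈ uIcc x y, |iteratedDeriv k g z - iteratedDeriv k g x| ≤ H * |z - x| ^ α) :
    |g y - ∑ i ∈ range (k + 1), iteratedDeriv i g x * (y - x) ^ i / i !|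
      ≤ H * |y - x| ^ ((k : ℝ) + α) / k ! := by
  rcases eq_or_ne x y with rfl | hne
  · rw [sum_range_succ']
    simp only [sub_self, ne_eq, add_eq_zero, one_ne_zero, and_false, not_false_eq_true,
      zero_pow, mul_zero, zero_div, sum_const_zero, iteratedDeriv_zero, pow_zero, mul_one,
      factorial_zero, cast_one, div_one, zero_add, abs_zero]
    positivity
  cases k with
  | zero => simpa using hHol y right_mem_uIcc
  | succ n =>
    obtain ⟨ξ, hξ, hR⟩ := taylor_mean_remainder_lagrange_iteratedDeriv hne
      (by exact_mod_cast hg.mono hxy)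
    have hT : taylorWithinEval g n (uIcc x y) x y
        = ∑ i ∈ range (n + 1), iteratedDeriv i g x * (y - x) ^ i / i ! := by
      rw [taylor_within_apply]
      refine sum_congr rfl fun i hi => ?_
      have hgx : ContDiffAt ℝ i g x := (hg.contDiffAt (hs.mem_nhds (hxy left_mem_uIcc))).of_le
        (by exact_mod_cast (mem_range.mp hi).le)
      rw [iteratedDerivWithin_eq_iteratedDeriv (uniqueDiffOn_uIcc hne) hgx
        left_mem_uIcc, smul_eq_mul]
      ring
    have hξ' : ξ ∈ uIcc x y := Ioo_subset_Icc_self hξ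
    have hξx : |iteratedDeriv (n + 1) g ξ - iteratedDeriv (n + 1) g x| ≤ H * |y - x| ^ α :=
      (hHol ξ hξ').trans <| mul_le_mul_of_nonneg_left
        (Real.rpow_le_rpow (abs_nonneg _) (abs_sub_left_of_mem_uIcc hξ') hα) hH
    have hpow : |y - x| ^ ((↑(n + 1) : ℝ) + α) = |y - x| ^ α * |y - x| ^ (n + 1) := by
      rw [Real.rpow_add (abs_pos.mpr (sub_ne_zero.mpr hne.symm)), Real.rpow_natCast, mul_comm]
    calc |g y - ∑ i ∈ range (n + 1 + 1), iteratedDeriv i g x * (y - x) ^ i / i !|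
        = |iteratedDeriv (n + 1) g ξ - iteratedDeriv (n + 1) g x| * |y - x| ^ (n + 1)
            / (n + 1)! := by
          rw [sum_range_succ, ← hT, sub_add_eq_sub_sub, hR, ← sub_div, ← sub_mul, abs_div,
            abs_mul, abs_pow, Nat.abs_cast]
      _ ≤ H * |y - x| ^ α * |y - x| ^ (n + 1) / (n + 1)! := by gcongr
      _ = H * |y - x| ^ ((↑(n + 1) : ℝ) + α) / (n + 1)! := by rw [hpow, mul_assoc]

theorem abs_mul_abs_deriv_le_of_holder {g : ℝ → ℝ} {s : Set ℝ} {k : ℕ} {H α x h : ℝ}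
    {c : Fin (k + 1) → ℝ} (hk : k ≠ 0)
    (hc : ∀ i < k + 1, ∑ j, c j * (j : ℝ) ^ i = if i = 1 then 1 else 0)
    (hs : IsOpen s) (hs' : Convex ℝ s) (hg : ContDiffOn ℝ (k : ℕ∞) g s) (hH : 0 ≤ H)
    (hα : 0 ≤ α) (hpts : ∀ j : Fin (k + 1), x + j * h ∈ s)
    (hHol : ∀ z ∈ s, |iteratedDeriv k g z - iteratedDeriv k g x| ≤ H * |z - x| ^ α)
    (hdom : ∀ j : Fin (k + 1), |g (x + j * h)| ≤ |g x|) :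
    |h| * |deriv g x| ≤ (∑ j, |c j|) * (|g x| + H * (k * |h|) ^ ((k : ℝ) + α) / k !) := by
  have hx : x ∈ s := by simpa using hpts 0
  set P : Fin (k + 1) → ℝ :=
    fun j => ∑ i ∈ range (k + 1), iteratedDeriv i g x * (j * h) ^ i / i ! with hP
  have hremainder : ∀ j : Fin (k + 1),
      |g (x + j * h) - P j| ≤ H * (k * |h|) ^ ((k : ℝ) + α) / k ! := fun j => by
    have hstep : |(j : ℝ) * h| ≤ k * |h| := by
      rw [abs_mul, Nat.abs_cast]
      gcongr
      exact_mod_cast j.is_le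
    have hseg := hs'.ordConnected.uIcc_subset hx (hpts j)
    have := abs_sub_taylor_le_of_holder hs hg hseg hH hα fun z hz => hHol z (hseg hz)
    simp only [add_sub_cancel_left] at this
    exact this.trans (by gcongr)
  have hcombination : ∑ j, c j * P j = h * deriv g x := by
    have hterm : ∀ i ∈ range (k + 1), ∑ j, c j * (iteratedDeriv i g x * (j * h) ^ i / i !)
        = if i = 1 then iteratedDeriv i g x * h ^ i / i ! else 0 := fun i hi => by
      calc ∑ j, c j * (iteratedDeriv i g x * (j * h) ^ i / i !)
          = iteratedDeriv i g x * h ^ i / i ! * ∑ j, c j * (j : ℝ) ^ i := by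
            rw [mul_sum]
            exact sum_congr rfl fun j _ => by ring
        _ = _ := by rw [hc i (mem_range.mp hi), mul_ite, mul_one, mul_zero]
    simp only [hP, mul_sum]
    rw [sum_comm, sum_congr rfl hterm, sum_ite_eq', if_pos (by simp; omega)]
    simp [mul_comm]
  have hsplit : h * deriv g x = ∑ j, c j * g (x + j * h) - ∑ j, c j * (g (x + j * h) - P j) := by
    rw [← hcombination, ← sum_sub_distrib]
    exact sum_congr rfl fun j _ => by ring
  calc |h| * |deriv g x| = |h * deriv g x| := (abs_mul _ _).symm
    _ ≤ ∑ j, |c j| * |g x| + ∑ j, |c j| * (H * (k * |h|) ^ ((k : ℝ) + α) / k !) := by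
        rw [hsplit]
        refine (abs_sub _ _).trans (add_le_add ?_ ?_) <;>
          refine (abs_sum_le_sum_abs _ _).trans (sum_le_sum fun j _ => ?_) <;>
          rw [abs_mul]
        exacts [mul_le_mul_of_nonneg_left (hdom j) (abs_nonneg _),
          mul_le_mul_of_nonneg_left (hremainder j) (abs_nonneg _)]
    _ = _ := by rw [← sum_mul, ← sum_mul, mul_add]

theorem abs_sign_eq_one {y : ℝ} (hy : y ≠ 0) : |(SignType.sign y : ℝ)| = 1 := by
  rcases hy.lt_or_gt with hy | hy
  · simp [sign_neg hy]
  · simp [sign_pos hy]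

theorem monotoneOn_or_antitoneOn_abs {g g' : ℝ → ℝ} {s : Set ℝ} (hs : Convex ℝ s)
    (hg : ∀ x ∈ s, HasDerivAt g (g' x) x) (hg₀ : ∀ x ∈ s, g x ≠ 0) (hg'₀ : ∀ x ∈ s, g' x ≠ 0) :
    MonotoneOn (fun x => |g x|) s ∨ AntitoneOn (fun x => |g x|) s := by
  have habs : ∀ x ∈ s, HasDerivAt (fun y => |g y|) (SignType.sign (g x) * g' x) x := fun x hx =>
    (hasDerivAt_abs (hg₀ x hx)).comp x (hg x hx)
  have hcont : ContinuousOn (fun x => |g x|) s := fun x hx =>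
    (habs x hx).continuousAt.continuousWithinAt
  have hderiv : ∀ x ∈ interior s, HasDerivWithinAt (fun y => |g y|)
      (SignType.sign (g x) * g' x) (interior s) x := fun x hx =>
    (habs x (interior_subset hx)).hasDerivWithinAt
  have hne : ∀ x ∈ s, (SignType.sign (g x) : ℝ) * g' x ≠ 0 := fun x hx =>
    mul_ne_zero (fun h0 => by simpa [h0] using abs_sign_eq_one (hg₀ x hx)) (hg'₀ x hx)
  rcases hasDerivWithinAt_forall_lt_or_forall_gt_of_forall_ne hs
    (fun x hx => (habs x hx).hasDerivWithinAt) hne with hneg | hpos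
  · exact Or.inr (strictAntiOn_of_hasDerivWithinAt_neg hs hcont hderiv
      fun x hx => hneg x (interior_subset hx)).antitoneOn
  · exact Or.inl (strictMonoOn_of_hasDerivWithinAt_pos hs hcont hderiv
      fun x hx => hpos x (interior_subset hx)).monotoneOn

theorem exists_sign_forall_le_of_monotoneOn_or_antitoneOn {F : ℝ → ℝ} {a b x T : ℝ}
    (hF : MonotoneOn F (Ioo a b) ∨ AntitoneOn F (Ioo a b)) (hx : x ∈ Ioo a b)
    (hT : T < min (x - a) (b - x)) :
    ∃ σ : ℝ, |σ| = 1 ∧ ∀ t ∈ Icc 0 T, x + σ * t ∈ Ioo a b ∧ F (x + σ * t) ≤ F x := by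
  have hTa := hT.trans_le (min_le_left _ _)
  have hTb := hT.trans_le (min_le_right _ _)
  rcases hF with hmono | hanti
  · refine ⟨-1, by simp, fun t ht => ?_⟩
    have hmem : x + -1 * t ∈ Ioo a b := ⟨by linarith [ht.2], by linarith [ht.1, hx.2]⟩
    exact ⟨hmem, hmono hmem hx (by linarith [ht.1])⟩
  · refine ⟨1, abs_one, fun t ht => ?_⟩
    have hmem : x + 1 * t ∈ Ioo a b := ⟨by linarith [ht.1, hx.1], by linarith [ht.2]⟩
    exact ⟨hmem, hanti hx hmem (by linarith [ht.1])⟩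

theorem mul_abs_deriv_le_of_monotoneOn_or_antitoneOn_abs {g : ℝ → ℝ} {k : ℕ} {a b H α x T : ℝ}
    {c : Fin (k + 1) → ℝ} (hk : k ≠ 0)
    (hc : ∀ i < k + 1, ∑ j, c j * (j : ℝ) ^ i = if i = 1 then 1 else 0)
    (hg : ContDiffOn ℝ (k : ℕ∞) g (Ioo a b)) (hH : 0 ≤ H) (hα : 0 ≤ α)
    (hHol : ∀ z ∈ Ioo a b, |iteratedDeriv k g z - iteratedDeriv k g x| ≤ H * |z - x| ^ α)
    (hmono : MonotoneOn (fun y => |g y|) (Ioo a b) ∨ AntitoneOn (fun y => |g y|) (Ioo a b))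
    (hx : x ∈ Ioo a b) (hT : 0 < T) (hTx : T < min (x - a) (b - x)) :
    T * |deriv g x| ≤ k * (∑ j, |c j|) * (|g x| + H * T ^ ((k : ℝ) + α)) := by
  obtain ⟨σ, hσ, hstep⟩ := exists_sign_forall_le_of_monotoneOn_or_antitoneOn hmono hx hTx
  have hk₀ : (0 : ℝ) < k := by positivity
  have hnode : ∀ j : Fin (k + 1), x + j * (σ * (T / k)) = x + σ * (j * (T / k)) ∧
      (j : ℝ) * (T / k) ∈ Icc 0 T := fun j => by
    refine ⟨by ring, by positivity, ?_⟩
    calc (j : ℝ) * (T / k) ≤ k * (T / k) := by gcongr; exact_mod_cast j.is_le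
      _ = T := by field_simp
  have key := abs_mul_abs_deriv_le_of_holder hk hc isOpen_Ioo (convex_Ioo a b) hg hH hα
    (fun j => (hnode j).1 ▸ (hstep _ (hnode j).2).1) hHol
    (fun j => (hnode j).1 ▸ (hstep _ (hnode j).2).2)
  rw [abs_mul, hσ, one_mul, abs_of_pos (by positivity), mul_div_cancel₀ _ hk₀.ne'] at key
  have hfact : H * T ^ ((k : ℝ) + α) / k ! ≤ H * T ^ ((k : ℝ) + α) :=
    div_le_self (by positivity) (by exact_mod_cast k.factorial_pos)
  calc T * |deriv g x| = k * (T / k * |deriv g x|) := by field_simp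
    _ ≤ k * ((∑ j, |c j|) * (|g x| + H * T ^ ((k : ℝ) + α))) :=
        mul_le_mul_of_nonneg_left (key.trans (by gcongr)) hk₀.le
    _ = _ := by ring

theorem differentiableAt_and_abs_deriv_rpow_le_of_abs_rpow_eq {f g : ℝ → ℝ} {s : Set ℝ}
    {m x : ℝ} (hs : IsOpen s) (hs' : IsPreconnected s) (hm : 1 ≤ m) (hf : ContinuousOn f s)
    (hg : ∀ y ∈ s, DifferentiableAt ℝ g y) (hg₀ : ∀ y ∈ s, g y ≠ 0)
    (hfg : ∀ y ∈ s, |f y| ^ m = |g y|) (hx : x ∈ s) :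
    DifferentiableAt ℝ f x ∧ |deriv f x| ^ m ≤ |deriv g x| ^ m * |g x| ^ (1 - m) := by
  have hm₀ : m ≠ 0 := by positivity
  have hroot : ∀ y ∈ s, |f y| = |g y| ^ m⁻¹ := fun y hy => by
    rw [← hfg y hy, Real.rpow_rpow_inv (abs_nonneg _) hm₀]
  have hf₀ : ∀ y ∈ s, f y ≠ 0 := fun y hy h0 => hg₀ y hy <| by
    simpa [h0, Real.zero_rpow hm₀] using (hfg y hy).symm
  obtain ⟨ε, hε, hfε⟩ : ∃ ε : ℝ, |ε| = 1 ∧ ∀ y ∈ s, f y = ε * |g y| ^ m⁻¹ := by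
    rcases hs'.eq_or_eq_neg_of_sq_eq hf hf.abs (fun y _ => by simp [sq_abs])
      (fun hy => abs_ne_zero.mpr (hf₀ _ hy)) with h | h
    · exact ⟨1, abs_one, fun y hy => (h hy).trans (by simp only [hroot y hy, one_mul])⟩
    · exact ⟨-1, by simp, fun y hy =>
        (h hy).trans (by simp only [Pi.neg_apply, hroot y hy, neg_one_mul])⟩
  have hD : HasDerivAt f
      (ε * (SignType.sign (g x) * deriv g x * m⁻¹ * |g x| ^ (m⁻¹ - 1))) x := by
    have habs := (hasDerivAt_abs (hg₀ x hx)).comp x (hg x hx).hasDerivAt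
    refine ((habs.rpow_const (Or.inl (abs_ne_zero.mpr (hg₀ x hx)))).const_mul ε)
      |>.congr_of_eventuallyEq ?_
    filter_upwards [hs.mem_nhds hx] with y hy using hfε y hy
  have habs_deriv : |deriv f x| = |deriv g x| * m⁻¹ * |g x| ^ (m⁻¹ - 1) := by
    rw [hD.deriv, abs_mul, hε, one_mul, abs_mul, abs_mul, abs_mul, abs_sign_eq_one (hg₀ x hx),
      one_mul, abs_of_pos (by positivity : 0 < m⁻¹),
      abs_of_nonneg (Real.rpow_nonneg (abs_nonneg _) _)]
  refine ⟨hD.differentiableAt, ?_⟩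
  calc |deriv f x| ^ m = (|deriv g x| * m⁻¹) ^ m * |g x| ^ (1 - m) := by
        rw [habs_deriv, Real.mul_rpow (by positivity) (by positivity), ← Real.rpow_mul
          (abs_nonneg _), show (m⁻¹ - 1) * m = 1 - m by field_simp]
    _ ≤ |deriv g x| ^ m * |g x| ^ (1 - m) := by
        gcongr
        exact mul_le_of_le_one_right (abs_nonneg _) (inv_le_one_of_one_le₀ hm)

theorem rpow_mul_rpow_one_sub_le_of_mul_le_mul {u B G K t m : ℝ} (hu : 0 ≤ u) (huG : u ≤ G)
    (hB : 0 < B) (ht : 0 < t) (hK : 0 ≤ K) (hm : 1 ≤ m) (htu : t * u ≤ K * B) :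
    u ^ m * B ^ (1 - m) ≤ (K * t⁻¹) ^ (m - 1) * G := by
  have hu' : u ≤ K * t⁻¹ * B := by
    rw [mul_right_comm, ← div_eq_mul_inv, le_div_iff₀ ht]
    linarith
  have hBB : B ^ (m - 1) * B ^ (1 - m) = 1 := by
    rw [← Real.rpow_add hB, sub_add_sub_cancel', sub_self, Real.rpow_zero]
  calc u ^ m * B ^ (1 - m) = u ^ (m - 1) * B ^ (1 - m) * u := by
        rw [mul_right_comm, ← Real.rpow_add_one' hu (by linarith), sub_add_cancel]
    _ ≤ (K * t⁻¹ * B) ^ (m - 1) * B ^ (1 - m) * G := by gcongr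
    _ = (K * t⁻¹) ^ (m - 1) * G := by
        rw [Real.mul_rpow (by positivity) hB.le]
        linear_combination (K * t⁻¹) ^ (m - 1) * G * hBB

theorem rpow_mul_rpow_one_sub_le_of_mul_le_mul_of_mul_rpow_eq {u B H K r m : ℝ} (hu : 0 ≤ u)
    (hB : 0 < B) (hr : 0 < r) (hK : 0 ≤ K) (hm : 0 < m) (hru : r * u ≤ K * B)
    (hrm : H * r ^ m = B) :
    u ^ m * B ^ (1 - m) ≤ K ^ m * H := by
  have hu' : u ≤ K * B / r := by
    rw [le_div_iff₀ hr]
    linarith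
  have hB1 : B ^ m * B ^ (1 - m) = B := by
    rw [← Real.rpow_add hB, add_sub_cancel, Real.rpow_one]
  calc u ^ m * B ^ (1 - m) ≤ (K * B / r) ^ m * B ^ (1 - m) := by gcongr
    _ = K ^ m * H := by
        rw [Real.div_rpow (by positivity) hr.le, Real.mul_rpow hK hB.le, div_mul_eq_mul_div,
          mul_assoc, hB1, div_eq_iff (by positivity)]
        linear_combination K ^ m * hrm.symm

theorem rpow_mul_rpow_one_sub_le_of_forall_mul_le {u B H G d K m : ℝ} (hu : 0 ≤ u)
    (huG : u ≤ G) (hB : 0 < B) (hH : 0 ≤ H) (hd : 0 < d) (hK : 0 ≤ K) (hm : 1 ≤ m)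
    (h : ∀ t, 0 < t → t < d → t * u ≤ K * (B + H * t ^ m)) :
    u ^ m * B ^ (1 - m) ≤ max 1 (4 * K) ^ m * max H (G * d⁻¹ ^ (m - 1)) := by
  have hM : 1 ≤ max 1 (4 * K) := le_max_left _ _
  have hG : 0 ≤ G := hu.trans huG
  by_cases hcase : H * (d / 2) ^ m ≤ B
  · have htu : d / 2 * u ≤ 2 * K * B := by
      nlinarith [h (d / 2) (by positivity) (by linarith), mul_le_mul_of_nonneg_left hcase hK]
    calc u ^ m * B ^ (1 - m) ≤ (2 * K * (d / 2)⁻¹) ^ (m - 1) * G :=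
          rpow_mul_rpow_one_sub_le_of_mul_le_mul hu huG hB (by positivity) (by positivity) hm htu
      _ = (4 * K) ^ (m - 1) * (G * d⁻¹ ^ (m - 1)) := by
          rw [inv_div, show 2 * K * (2 / d) = 4 * K * d⁻¹ by ring,
            Real.mul_rpow (by positivity) (by positivity)]
          ring
      _ ≤ max 1 (4 * K) ^ m * max H (G * d⁻¹ ^ (m - 1)) := by
          refine mul_le_mul ?_ (le_max_right _ _) (by positivity) (by positivity)
          exact (Real.rpow_le_rpow (by positivity) (le_max_right _ _) (by linarith)).trans
            (Real.rpow_le_rpow_of_exponent_le hM (by linarith))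
  · push Not at hcase
    have hH₀ : 0 < H := by
      by_contra! hH'
      nlinarith [mul_nonpos_of_nonpos_of_nonneg hH' (by positivity : 0 ≤ (d / 2) ^ m)]
    set r := (B / H) ^ m⁻¹
    have hr : 0 < r := by positivity
    have hrm : H * r ^ m = B := by
      rw [← Real.rpow_mul (by positivity), inv_mul_cancel₀ (by linarith), Real.rpow_one]
      field_simp
    have hrd : r < d / 2 := by
      refine (Real.rpow_lt_rpow_iff (z := m) hr.le (by positivity) (by linarith)).mp ?_
      rwa [← mul_lt_mul_iff_right₀ hH₀, hrm]
    have hru : r * u ≤ 2 * K * B := by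
      nlinarith [h r hr (by linarith)]
    calc u ^ m * B ^ (1 - m) ≤ (2 * K) ^ m * H :=
          rpow_mul_rpow_one_sub_le_of_mul_le_mul_of_mul_rpow_eq hu hB hr (by positivity)
            (by linarith) hru hrm
      _ ≤ max 1 (4 * K) ^ m * max H (G * d⁻¹ ^ (m - 1)) := by
          refine mul_le_mul ?_ (le_max_left _ _) hH (by positivity)
          exact Real.rpow_le_rpow (by positivity) (by linarith [le_max_right 1 (4 * K)])
            (by linarith)

theorem inv_min_sub_le_div {a b x : ℝ} (hx : x ∈ Ioo a b) :
    (min (x - a) (b - x))⁻¹ ≤ (b - a) / ((x - a) * (b - x)) := by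
  have hxa : 0 < x - a := sub_pos.mpr hx.1
  have hbx : 0 < b - x := sub_pos.mpr hx.2
  rw [show (b - a) / ((x - a) * (b - x)) = (x - a)⁻¹ + (b - x)⁻¹ by field_simp; ring]
  rcases le_total (x - a) (b - x) with h | h
  · rw [min_eq_left h]; linarith [inv_pos.mpr hbx]
  · rw [min_eq_right h]; linarith [inv_pos.mpr hxa]

/-- **Pointwise estimate on the derivative of the root (Proposition, part 1).**
Let `f` be continuous on `(a,b)` and `g ∈ C^{k,α}((a,b))` with `|f|^(k+α) = |g|` and
`g·g' ≠ 0` on `(a,b)`; let `H` be an `α`-Hölder constant for `g^(k)` and `G` a bound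
for `|g'|` on `(a,b)`. Then `f` is differentiable on `(a,b)` and, for a constant
`C₁(k)` depending only on `k`, for every `x ∈ (a,b)`:
`|f'(x)|^(k+α) ≤ C₁(k) · max { H, G · ((b-a)/((x-a)(b-x)))^(k+α-1) }`. -/
theorem pointwise_estimate_root_derivative (k : ℕ) (hk : 0 < k) :
    ∃ C₁ : ℝ, ∀ α : ℝ, α ∈ Set.Ioc (0 : ℝ) 1 → ∀ a b : ℝ, a < b →
      ∀ f g : ℝ → ℝ,
      ContinuousOn f (Ioo a b) →
      ContDiffOn ℝ (k : ℕ∞) g (Ioo a b) →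
      (∀ i : ℕ, i ≤ k → ∃ B : ℝ, ∀ x ∈ Ioo a b,
        |iteratedDerivWithin i g (Ioo a b) x| ≤ B) →
      ∀ H : ℝ, 0 ≤ H →
      (∀ x ∈ Ioo a b, ∀ y ∈ Ioo a b,
        |iteratedDerivWithin k g (Ioo a b) y - iteratedDerivWithin k g (Ioo a b) x|
          ≤ H * |y - x| ^ α) →
      ∀ G : ℝ, 0 ≤ G →
      (∀ x ∈ Ioo a b, |derivWithin g (Ioo a b) x| ≤ G) →
      (∀ x ∈ Ioo a b, |f x| ^ ((k : ℝ) + α) = |g x|) →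
      (∀ x ∈ Ioo a b, g x * derivWithin g (Ioo a b) x ≠ 0) →
      (∀ x ∈ Ioo a b, DifferentiableAt ℝ f x) ∧
      (∀ x ∈ Ioo a b, |deriv f x| ^ ((k : ℝ) + α) ≤
        C₁ * max H (G * ((b - a) / ((x - a) * (b - x))) ^ ((k : ℝ) + α - 1))) := by
  obtain ⟨c, hc⟩ := exists_sum_mul_pow_eq (v := fun j : Fin (k + 1) => (j : ℝ))
    (Nat.cast_injective.comp Fin.val_injective) fun i => if i = 1 then 1 else 0
  refine ⟨max 1 (4 * (k * ∑ j, |c j|)) ^ ((k : ℝ) + 1), ?_⟩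
  intro α hα a b hab f g hf hg _ H hH hHol G hG hGbd hfg hne
  have hderiv : EqOn (derivWithin g (Ioo a b)) (deriv g) (Ioo a b) :=
    fun x hx => derivWithin_of_isOpen isOpen_Ioo hx
  have hiter : EqOn (iteratedDerivWithin k g (Ioo a b)) (iteratedDeriv k g) (Ioo a b) :=
    iteratedDerivWithin_of_isOpen isOpen_Ioo
  have hgdiff : ∀ x ∈ Ioo a b, DifferentiableAt ℝ g x := fun x hx =>
    (hg.differentiableOn (by exact_mod_cast hk.ne')).differentiableAt (isOpen_Ioo.mem_nhds hx)
  have hg₀ : ∀ x ∈ Ioo a b, g x ≠ 0 := fun x hx => left_ne_zero_of_mul (hne x hx)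
  have hg'₀ : ∀ x ∈ Ioo a b, deriv g x ≠ 0 := fun x hx =>
    hderiv hx ▸ right_ne_zero_of_mul (hne x hx)
  have hmono := monotoneOn_or_antitoneOn_abs (convex_Ioo a b)
    (fun x hx => (hgdiff x hx).hasDerivAt) hg₀ hg'₀
  have hm : 1 ≤ (k : ℝ) + α := by
    have : (1 : ℝ) ≤ k := by exact_mod_cast hk
    linarith [hα.1]
  have hroot := fun x (hx : x ∈ Ioo a b) => differentiableAt_and_abs_deriv_rpow_le_of_abs_rpow_eq
    isOpen_Ioo isPreconnected_Ioo hm hf hgdiff hg₀ hfg hx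
  refine ⟨fun x hx => (hroot x hx).1, fun x hx => ?_⟩
  have hd : 0 < min (x - a) (b - x) := lt_min (sub_pos.2 hx.1) (sub_pos.2 hx.2)
  calc |deriv f x| ^ ((k : ℝ) + α) ≤ |deriv g x| ^ ((k : ℝ) + α) * |g x| ^ (1 - ((k : ℝ) + α)) :=
        (hroot x hx).2
    _ ≤ max 1 (4 * (k * ∑ j, |c j|)) ^ ((k : ℝ) + α) *
          max H (G * (min (x - a) (b - x))⁻¹ ^ ((k : ℝ) + α - 1)) :=
        rpow_mul_rpow_one_sub_le_of_forall_mul_le (abs_nonneg _) (hderiv hx ▸ hGbd x hx)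
          (abs_pos.2 (hg₀ x hx)) hH hd (by positivity) hm fun T hT hTd =>
            mul_abs_deriv_le_of_monotoneOn_or_antitoneOn_abs hk.ne' hc hg hH hα.1.le
              (fun z hz => hiter hx ▸ hiter hz ▸ hHol x hx z hz) hmono hx hT hTd
    _ ≤ _ := by
        gcongr
        · exact le_max_left _ _
        · linarith [hα.2]
        · exact inv_min_sub_le_div hx
end

section
/- Let k be a positive integer, α ∈ (0,1], let (a,b) ⊆ [c,d] ⊆ ℝ be an open and a closed bounded interval, f : (a,b) → ℝ continuous, and g ∈ C^k([c,d]). Assume: (i) |f(x)|^{k+α} = |g(x)| for every x ∈ (a,b); (ii) g(x)·g'(x) ≠ 0 for every x ∈ (a,b); (iii) g^{(k)} is α-Hölder continuous on [c,d]; (iv) for every h = 1, …, k there exists x_h ∈ [c,d] with g^{(h)}(x_h) = 0. Let p be defined by 1/p + 1/(k+α) = 1. Then there exists a constant C₂(k), depending only on k, such that ‖f'‖_{p,w,(a,b)} ≤ C₂(k) · [Höld_α(g^{(k)}, (c,d))]^{1/(k+α)} · (d-c)^{1/p}. -/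
open MeasureTheory Set
open scoped ENNReal NNReal

/-- The weak `L^p` quasinorm of `ψ` over `Ω ⊆ ℝ`:
`sup_{M ≥ 0} M · (meas {x ∈ Ω : |ψ(x)| > M})^(1/p)`. -/
noncomputable def weakLpNorm (p : ℝ) (Ω : Set ℝ) (ψ : ℝ → ℝ) : ℝ≥0∞ :=
  ⨆ M : ℝ≥0, (M : ℝ≥0∞) * (volume {x | x ∈ Ω ∧ (M : ℝ) < |ψ x|}) ^ (1 / p)

open Filter Topology

/-! Write `κ = k + α`. Near each point of `(a,b)` we have `f = ±|g|^(1/κ)`, so `f` is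
differentiable with `κ |f|^(κ-1) |f'| = |g'|`, and `f'` never vanishes. Integrating the Hölder
bound on `g^(k)` down through the derivatives `g^(h)`, each of which vanishes somewhere, gives
`|g'| ≤ G := H (d-c)^(κ-1)`. On the level set `{|f'| > M}` this forces `|f| ≤ (G/M)^(p-1)`.
By Darboux `f'` has constant sign, so for `x ≤ y` in the level set
`M · meas({|f'| > M} ∩ [x,y]) ≤ |f y - f x| ≤ 2 (G/M)^(p-1)`, and inner regularity turns this
into `meas {|f'| > M} ≤ 2 G^(p-1) / M^p`, that is `‖f'‖_{p,w} ≤ 2^(1/p) G^(1/κ)`. -/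

theorem abs_le_mul_of_abs_derivWithin_le {u : ℝ → ℝ} {c d B x₀ : ℝ}
    (hu : DifferentiableOn ℝ u (Icc c d)) (hx₀ : x₀ ∈ Icc c d) (hux₀ : u x₀ = 0)
    (hB : ∀ y ∈ Icc c d, |derivWithin u (Icc c d) y| ≤ B) :
    ∀ x ∈ Icc c d, |u x| ≤ B * (d - c) := by
  intro x hx
  have hB0 : 0 ≤ B := (abs_nonneg _).trans (hB x₀ hx₀)
  calc |u x| = ‖u x - u x₀‖ := by rw [hux₀, sub_zero, Real.norm_eq_abs]
    _ ≤ B * ‖x - x₀‖ := (convex_Icc c d).norm_image_sub_le_of_norm_derivWithin_le hu hB hx₀ hx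
    _ ≤ B * (d - c) := by
        gcongr
        rw [Real.norm_eq_abs, abs_sub_le_iff]
        constructor <;> linarith [hx.1, hx.2, hx₀.1, hx₀.2]

theorem abs_iteratedDerivWithin_le_of_holder {g : ℝ → ℝ} {k : ℕ} {c d α H : ℝ} (hcd : c < d)
    (hα : 0 ≤ α) (hH : 0 ≤ H) (hg : ContDiffOn ℝ (k : ℕ∞) g (Icc c d))
    (hHo : ∀ x ∈ Icc c d, ∀ y ∈ Icc c d,
      |iteratedDerivWithin k g (Icc c d) y - iteratedDerivWithin k g (Icc c d) x|
        ≤ H * |y - x| ^ α)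
    (hvan : ∀ h : ℕ, 1 ≤ h → h ≤ k → ∃ x ∈ Icc c d, iteratedDerivWithin h g (Icc c d) x = 0) :
    ∀ j < k, ∀ x ∈ Icc c d,
      |iteratedDerivWithin (k - j) g (Icc c d) x| ≤ H * (d - c) ^ ((j : ℝ) + α) := by
  intro j
  induction j with
  | zero =>
    intro hk x hx
    obtain ⟨x₀, hx₀, hgx₀⟩ := hvan k hk le_rfl
    have hdist : |x - x₀| ≤ d - c := by
      rw [abs_sub_le_iff]
      constructor <;> linarith [hx.1, hx.2, hx₀.1, hx₀.2]
    simpa [hgx₀] using (hHo x₀ hx₀ x hx).trans (by gcongr)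
  | succ j ih =>
    intro hjk
    obtain ⟨x₀, hx₀, hgx₀⟩ := hvan (k - (j + 1)) (by omega) (by omega)
    have hdiff : DifferentiableOn ℝ (iteratedDerivWithin (k - (j + 1)) g (Icc c d)) (Icc c d) :=
      hg.differentiableOn_iteratedDerivWithin (Nat.cast_lt.mpr (by omega))
        (uniqueDiffOn_Icc hcd)
    have hderiv : ∀ y ∈ Icc c d,
        |derivWithin (iteratedDerivWithin (k - (j + 1)) g (Icc c d)) (Icc c d) y|
          ≤ H * (d - c) ^ ((j : ℝ) + α) := by
      intro y hy
      rw [← iteratedDerivWithin_succ, show k - (j + 1) + 1 = k - j by omega]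
      exact ih (by omega) y hy
    intro x hx
    calc _ ≤ H * (d - c) ^ ((j : ℝ) + α) * (d - c) :=
          abs_le_mul_of_abs_derivWithin_le hdiff hx₀ hgx₀ hderiv x hx
      _ = H * (d - c) ^ (((j + 1 : ℕ) : ℝ) + α) := by
          rw [mul_assoc, ← Real.rpow_add_one (by linarith)]
          push_cast
          ring_nf

theorem abs_derivWithin_le_of_holder {g : ℝ → ℝ} {k : ℕ} {c d α H : ℝ} (hk : 0 < k)
    (hcd : c < d) (hα : 0 ≤ α) (hH : 0 ≤ H) (hg : ContDiffOn ℝ (k : ℕ∞) g (Icc c d))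
    (hHo : ∀ x ∈ Icc c d, ∀ y ∈ Icc c d,
      |iteratedDerivWithin k g (Icc c d) y - iteratedDerivWithin k g (Icc c d) x|
        ≤ H * |y - x| ^ α)
    (hvan : ∀ h : ℕ, 1 ≤ h → h ≤ k → ∃ x ∈ Icc c d, iteratedDerivWithin h g (Icc c d) x = 0) :
    ∀ x ∈ Icc c d, |derivWithin g (Icc c d) x| ≤ H * (d - c) ^ ((k : ℝ) + α - 1) := by
  intro x hx
  have := abs_iteratedDerivWithin_le_of_holder hcd hα hH hg hHo hvan (k - 1) (by omega) x hx
  rw [Nat.sub_sub_self hk, iteratedDerivWithin_one, Nat.cast_sub hk] at this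
  convert this using 3
  push_cast
  ring

lemma abs_coe_sign_of_ne_zero {x : ℝ} (hx : x ≠ 0) : |(SignType.sign x : ℝ)| = 1 := by
  rcases hx.lt_or_gt with h | h <;> simp [h]

theorem eventuallyEq_or_eventuallyEq_neg_of_abs {f u : ℝ → ℝ} {x : ℝ} (hf : ContinuousAt f x)
    (hfx : f x ≠ 0) (h : (fun y => |f y|) =ᶠ[𝓝 x] u) : f =ᶠ[𝓝 x] u ∨ f =ᶠ[𝓝 x] -u := by
  rcases hfx.lt_or_gt with hneg | hpos
  · refine Or.inr ?_
    filter_upwards [h, hf.eventually (gt_mem_nhds hneg)] with y hy hy'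
    simp [← hy, abs_of_neg hy']
  · refine Or.inl ?_
    filter_upwards [h, hf.eventually (lt_mem_nhds hpos)] with y hy hy'
    simp [← hy, abs_of_pos hy']

theorem differentiableAt_and_mul_rpow_mul_abs_deriv_eq {f g : ℝ → ℝ} {x κ : ℝ} (hκ : 0 < κ)
    (hf : ContinuousAt f x) (hg : DifferentiableAt ℝ g x) (hgx : g x ≠ 0)
    (hfg : ∀ᶠ y in 𝓝 x, |f y| ^ κ = |g y|) :
    DifferentiableAt ℝ f x ∧ κ * |f x| ^ (κ - 1) * |deriv f x| = |deriv g x| := by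
  have hfx : f x ≠ 0 := by
    intro h
    have := hfg.self_of_nhds
    rw [h, abs_zero, Real.zero_rpow hκ.ne'] at this
    exact hgx (abs_eq_zero.mp this.symm)
  have hf_abs : (fun y => |f y|) =ᶠ[𝓝 x] fun y => |g y| ^ κ⁻¹ := by
    filter_upwards [hfg] with y hy
    rw [← hy, ← Real.rpow_mul (abs_nonneg _), mul_inv_cancel₀ hκ.ne', Real.rpow_one]
  have hdf : DifferentiableAt ℝ f x := by
    have hu : DifferentiableAt ℝ (fun y => |g y| ^ κ⁻¹) x :=
      (hg.abs hgx).rpow_const (Or.inl (abs_ne_zero.mpr hgx))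
    rcases eventuallyEq_or_eventuallyEq_neg_of_abs hf hfx hf_abs with h | h
    · exact hu.congr_of_eventuallyEq h
    · exact hu.neg.congr_of_eventuallyEq h
  refine ⟨hdf, ?_⟩
  have hg_abs : HasDerivAt (fun y => |g y|) (SignType.sign (g x) * deriv g x) x :=
    (hasDerivAt_abs hgx).comp x hg.hasDerivAt
  have hf_pow : HasDerivAt (fun y => |g y|)
      (SignType.sign (f x) * deriv f x * κ * |f x| ^ (κ - 1)) x :=
    (((hasDerivAt_abs hfx).comp x hdf.hasDerivAt).rpow_const
      (Or.inl (abs_ne_zero.mpr hfx))).congr_of_eventuallyEq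
        (by filter_upwards [hfg] with y hy; exact hy.symm)
  have := congrArg abs (hg_abs.unique hf_pow)
  simp only [abs_mul, abs_coe_sign_of_ne_zero hgx, abs_coe_sign_of_ne_zero hfx,
    abs_of_pos hκ, abs_of_nonneg (Real.rpow_nonneg (abs_nonneg (f x)) _)] at this
  linarith

theorem volume_le_of_forall_volume_inter_Icc_le {S : Set ℝ} (hS : MeasurableSet S) {C : ℝ≥0∞}
    (h : ∀ x ∈ S, ∀ y ∈ S, x ≤ y → volume (S ∩ Icc x y) ≤ C) : volume S ≤ C := by
  rw [hS.measure_eq_iSup_isCompact]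
  refine iSup₂_le fun K hKS => iSup_le fun hK => ?_
  rcases K.eq_empty_or_nonempty with rfl | hne
  · simp
  have hKsub : K ⊆ S ∩ Icc (sInf K) (sSup K) := fun z hz =>
    ⟨hKS hz, csInf_le hK.bddBelow hz, le_csSup hK.bddAbove hz⟩
  exact (measure_mono hKsub).trans (h _ (hKS (hK.sInf_mem hne)) _ (hKS (hK.sSup_mem hne))
    (csInf_le_csSup hne hK.bddBelow hK.bddAbove))

theorem volume_lt_abs_deriv_le_of_deriv_pos {f : ℝ → ℝ} {a b M m : ℝ} (hM : 0 < M)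
    (hf : ∀ x ∈ Ioo a b, DifferentiableAt ℝ f x) (hf' : ∀ x ∈ Ioo a b, 0 < deriv f x)
    (hm : ∀ x ∈ Ioo a b, M < |deriv f x| → |f x| ≤ m) :
    volume {x | x ∈ Ioo a b ∧ M < |deriv f x|} ≤ ENNReal.ofReal (2 * m / M) := by
  set S := {x | x ∈ Ioo a b ∧ M < |deriv f x|}
  have hS : MeasurableSet S :=
    measurableSet_Ioo.inter (measurableSet_lt measurable_const (measurable_deriv f).abs)
  refine volume_le_of_forall_volume_inter_Icc_le hS fun x hx y hy hxy => ?_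
  have hIcc : Icc x y ⊆ Ioo a b := ordConnected_Ioo.out hx.1 hy.1
  have hint : IntegrableOn (deriv f) (Icc x y) :=
    (integrableOn_Icc_iff_integrableOn_Ioc).mpr <| intervalIntegral.integrableOn_deriv_of_nonneg
      (HasDerivAt.continuousOn fun t ht => (hf t (hIcc ht)).hasDerivAt)
      (fun t ht => (hf t (hIcc (Ioo_subset_Icc_self ht))).hasDerivAt)
      (fun t ht => (hf' t (hIcc (Ioo_subset_Icc_self ht))).le)
  have hfin : volume (S ∩ Icc x y) ≠ ∞ :=
    (measure_inter_lt_top_of_right_ne_top measure_Icc_lt_top.ne).ne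
  have hchebyshev : M * volume.real (S ∩ Icc x y) ≤ ∫ t in S ∩ Icc x y, deriv f t := by
    simpa [mul_comm] using setIntegral_ge_of_const_le (hS.inter measurableSet_Icc) hfin
      (fun t ht => (ht.1.2.trans_eq (abs_of_pos (hf' t ht.1.1))).le)
      (hint.mono_set inter_subset_right)
  have hmono : ∫ t in S ∩ Icc x y, deriv f t ≤ ∫ t in Icc x y, deriv f t :=
    setIntegral_mono_set hint
      ((ae_restrict_iff' measurableSet_Icc).mpr (.of_forall fun t ht => (hf' t (hIcc ht)).le))
      (.of_forall inter_subset_right)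
  have hftc : ∫ t in Icc x y, deriv f t = f y - f x := by
    rw [integral_Icc_eq_integral_Ioc, ← intervalIntegral.integral_of_le hxy]
    exact intervalIntegral.integral_deriv_eq_sub
      (fun t ht => hf t (hIcc (uIcc_of_le hxy ▸ ht)))
      ((intervalIntegrable_iff_integrableOn_Icc_of_le hxy).mpr hint)
  have hreal : volume.real (S ∩ Icc x y) ≤ 2 * m / M := by
    rw [le_div_iff₀ hM]
    linarith [abs_le.mp (hm x hx.1 hx.2), abs_le.mp (hm y hy.1 hy.2)]
  rw [← ENNReal.ofReal_toReal hfin]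
  exact ENNReal.ofReal_le_ofReal hreal

theorem volume_lt_abs_deriv_le {f : ℝ → ℝ} {a b M m : ℝ} (hM : 0 < M)
    (hf : ∀ x ∈ Ioo a b, DifferentiableAt ℝ f x) (hf' : ∀ x ∈ Ioo a b, deriv f x ≠ 0)
    (hm : ∀ x ∈ Ioo a b, M < |deriv f x| → |f x| ≤ m) :
    volume {x | x ∈ Ioo a b ∧ M < |deriv f x|} ≤ ENNReal.ofReal (2 * m / M) := by
  rcases hasDerivWithinAt_forall_lt_or_forall_gt_of_forall_ne (convex_Ioo a b)
    (fun x hx => (hf x hx).hasDerivAt.hasDerivWithinAt) hf' with hneg | hpos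
  · simpa [deriv.neg] using volume_lt_abs_deriv_le_of_deriv_pos (f := -f) hM
      (fun x hx => (hf x hx).neg) (fun x hx => by simpa [deriv.neg] using hneg x hx)
      (by simpa [deriv.neg] using hm)
  · exact volume_lt_abs_deriv_le_of_deriv_pos hM hf hpos hm

theorem weakLpNorm_le_of_volume_le {p K : ℝ} {Ω : Set ℝ} {ψ : ℝ → ℝ} (hp : 0 < p) (hK : 0 ≤ K)
    (h : ∀ M : ℝ, 0 < M → volume {x | x ∈ Ω ∧ M < |ψ x|} ≤ ENNReal.ofReal (K / M ^ p)) :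
    weakLpNorm p Ω ψ ≤ ENNReal.ofReal (K ^ (1 / p)) := by
  refine iSup_le fun M => ?_
  rcases eq_or_ne M 0 with rfl | hM0
  · simp
  have hM : (0 : ℝ) < M := by positivity
  calc (M : ℝ≥0∞) * volume {x | x ∈ Ω ∧ (M : ℝ) < |ψ x|} ^ (1 / p)
      ≤ ENNReal.ofReal M * ENNReal.ofReal (K / (M : ℝ) ^ p) ^ (1 / p) := by
        rw [ENNReal.ofReal_coe_nnreal]
        gcongr
        exact h M hM
    _ = ENNReal.ofReal (K ^ (1 / p)) := by
        rw [ENNReal.ofReal_rpow_of_nonneg (by positivity) (by positivity),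
          ← ENNReal.ofReal_mul hM.le, Real.div_rpow hK (by positivity), ← Real.rpow_mul hM.le, mul_one_div_cancel hp.ne',
          Real.rpow_one, mul_div_cancel₀ _ hM.ne']

theorem weakLpNorm_deriv_le_of_rpow_mul_abs_deriv_le {f : ℝ → ℝ} {a b κ p G : ℝ} (hκ : 1 < κ)
    (hp : 1 / p + 1 / κ = 1) (hG : 0 ≤ G) (hf : ∀ x ∈ Ioo a b, DifferentiableAt ℝ f x)
    (hf' : ∀ x ∈ Ioo a b, deriv f x ≠ 0)
    (hbound : ∀ x ∈ Ioo a b, |f x| ^ (κ - 1) * |deriv f x| ≤ G) :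
    weakLpNorm p (Ioo a b) (deriv f) ≤ ENNReal.ofReal (2 ^ (1 / p) * G ^ (1 / κ)) := by
  have hp0 : 0 < p := by
    have : 0 < 1 / p := by
      have : 1 / κ < 1 := (div_lt_one (by linarith)).mpr hκ
      linarith
    exact one_div_pos.mp this
  have hconj : (p - 1) * (κ - 1) = 1 := by
    field_simp at hp
    linarith
  have hp1 : 0 ≤ p - 1 := by nlinarith
  have hlevel : ∀ M : ℝ, 0 < M → ∀ x ∈ Ioo a b, M < |deriv f x| → |f x| ≤ (G / M) ^ (p - 1) := by
    intro M hM x hx hMx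
    have hfM : |f x| ^ (κ - 1) ≤ G / M := by
      rw [le_div_iff₀ hM]
      exact (mul_le_mul_of_nonneg_left hMx.le (by positivity)).trans (hbound x hx)
    calc |f x| = (|f x| ^ (κ - 1)) ^ (p - 1) := by
          rw [← Real.rpow_mul (abs_nonneg _), mul_comm, hconj, Real.rpow_one]
      _ ≤ (G / M) ^ (p - 1) := by gcongr
  calc weakLpNorm p (Ioo a b) (deriv f) ≤ ENNReal.ofReal ((2 * G ^ (p - 1)) ^ (1 / p)) := by
        refine weakLpNorm_le_of_volume_le hp0 (by positivity) fun M hM => ?_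
        refine (volume_lt_abs_deriv_le hM hf hf' (hlevel M hM)).trans_eq ?_
        rw [Real.div_rpow hG hM.le, Real.rpow_sub_one hM.ne']
        field_simp
    _ = ENNReal.ofReal (2 ^ (1 / p) * G ^ (1 / κ)) := by
        rw [Real.mul_rpow zero_le_two (by positivity), ← Real.rpow_mul hG]
        congr 3
        field_simp at hp ⊢
        linarith

theorem weakLpNorm_deriv_le_of_abs_rpow_eq_abs {f g : ℝ → ℝ} {a b κ p G : ℝ} (hκ : 1 < κ)
    (hp : 1 / p + 1 / κ = 1) (hG : 0 ≤ G) (hf : ContinuousOn f (Ioo a b))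
    (hg : ∀ x ∈ Ioo a b, DifferentiableAt ℝ g x) (hfg : ∀ x ∈ Ioo a b, |f x| ^ κ = |g x|)
    (hgg' : ∀ x ∈ Ioo a b, g x * deriv g x ≠ 0) (hg' : ∀ x ∈ Ioo a b, |deriv g x| ≤ G) :
    weakLpNorm p (Ioo a b) (deriv f) ≤ ENNReal.ofReal (2 ^ (1 / p) * G ^ (1 / κ)) := by
  have hchain : ∀ x ∈ Ioo a b,
      DifferentiableAt ℝ f x ∧ κ * |f x| ^ (κ - 1) * |deriv f x| = |deriv g x| := fun x hx =>
    differentiableAt_and_mul_rpow_mul_abs_deriv_eq (by linarith)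
      (hf.continuousAt (Ioo_mem_nhds hx.1 hx.2)) (hg x hx) (left_ne_zero_of_mul (hgg' x hx))
      (eventually_of_mem (Ioo_mem_nhds hx.1 hx.2) hfg)
  have hf' : ∀ x ∈ Ioo a b, deriv f x ≠ 0 := by
    intro x hx hzero
    have hg'x := right_ne_zero_of_mul (hgg' x hx)
    rw [← abs_ne_zero, ← (hchain x hx).2, hzero] at hg'x
    simp at hg'x
  refine weakLpNorm_deriv_le_of_rpow_mul_abs_deriv_le hκ hp hG (fun x hx => (hchain x hx).1) hf'
    fun x hx => ?_
  calc _ ≤ κ * (|f x| ^ (κ - 1) * |deriv f x|) := le_mul_of_one_le_left (by positivity) hκ.le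
    _ = |deriv g x| := by rw [← mul_assoc, (hchain x hx).2]
    _ ≤ G := hg' x hx

/-- **Weak `L^p` estimate on an expanded interval.**
Let `(a,b) ⊆ [c,d]`, `f` continuous on `(a,b)`, `g ∈ C^k([c,d])` with
(i) `|f|^(k+α) = |g|` on `(a,b)`, (ii) `g·g' ≠ 0` on `(a,b)`, (iii) `g^(k)`
`α`-Hölder continuous on `[c,d]` with constant `H`, (iv) each derivative `g^(h)`,
`1 ≤ h ≤ k`, vanishing somewhere in `[c,d]`. If `1/p + 1/(k+α) = 1` then, for a
constant `C₂(k)` depending only on `k`,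
`‖f'‖_{p,w,(a,b)} ≤ C₂(k) · H^(1/(k+α)) · (d-c)^(1/p)`. -/
theorem weak_lp_estimate_expanded_interval (k : ℕ) (hk : 0 < k) :
    ∃ C₂ : ℝ, ∀ α : ℝ, α ∈ Set.Ioc (0 : ℝ) 1 → ∀ a b c d : ℝ, a < b → c < d →
      Ioo a b ⊆ Icc c d →
      ∀ f g : ℝ → ℝ,
      ContinuousOn f (Ioo a b) →
      ContDiffOn ℝ (k : ℕ∞) g (Icc c d) →
      (∀ x ∈ Ioo a b, |f x| ^ ((k : ℝ) + α) = |g x|) →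
      (∀ x ∈ Ioo a b, g x * derivWithin g (Icc c d) x ≠ 0) →
      ∀ H : ℝ, 0 ≤ H →
      (∀ x ∈ Icc c d, ∀ y ∈ Icc c d,
        |iteratedDerivWithin k g (Icc c d) y - iteratedDerivWithin k g (Icc c d) x|
          ≤ H * |y - x| ^ α) →
      (∀ h : ℕ, 1 ≤ h → h ≤ k → ∃ x ∈ Icc c d, iteratedDerivWithin h g (Icc c d) x = 0) →
      ∀ p : ℝ, 1 / p + 1 / ((k : ℝ) + α) = 1 →
      weakLpNorm p (Ioo a b) (deriv f) ≤
        ENNReal.ofReal (C₂ * H ^ (1 / ((k : ℝ) + α)) * (d - c) ^ (1 / p)) := by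
  refine ⟨2, fun α hα a b c d _ hcd hsub f g hf hg hfg hgg' H hH hHo hvan p hp => ?_⟩
  set κ : ℝ := k + α
  have hκ : 1 < κ := by
    have : (1 : ℝ) ≤ k := by exact_mod_cast hk
    linarith [hα.1]
  have hnhds : ∀ x ∈ Ioo a b, Icc c d ∈ 𝓝 x := fun x hx =>
    mem_interior_iff_mem_nhds.mp (interior_maximal hsub isOpen_Ioo hx)
  have hderiv_eq : ∀ x ∈ Ioo a b, derivWithin g (Icc c d) x = deriv g x := fun x hx =>
    derivWithin_of_mem_nhds (hnhds x hx)
  have hgd : ∀ x ∈ Ioo a b, DifferentiableAt ℝ g x := fun x hx =>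
    ((hg.differentiableOn (by simp [hk.ne'])) x (hsub hx)).differentiableAt (hnhds x hx)
  have hg' : ∀ x ∈ Ioo a b, |deriv g x| ≤ H * (d - c) ^ (κ - 1) := fun x hx => by
    rw [← hderiv_eq x hx]
    exact abs_derivWithin_le_of_holder hk hcd hα.1.le hH hg hHo hvan x (hsub hx)
  calc weakLpNorm p (Ioo a b) (deriv f)
      ≤ ENNReal.ofReal (2 ^ (1 / p) * (H * (d - c) ^ (κ - 1)) ^ (1 / κ)) :=
        weakLpNorm_deriv_le_of_abs_rpow_eq_abs hκ hp (by bound) hf hgd hfg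
          (fun x hx => hderiv_eq x hx ▸ hgg' x hx) hg'
    _ ≤ ENNReal.ofReal (2 * H ^ (1 / κ) * (d - c) ^ (1 / p)) := by
        have hexp : (κ - 1) * (1 / κ) = 1 / p := by
          field_simp at hp ⊢
          linarith
        rw [Real.mul_rpow hH (by bound), ← Real.rpow_mul (by linarith), hexp, ← mul_assoc]
        gcongr
        exact Real.rpow_le_self_of_one_le one_le_two
          (by linarith [one_div_pos.mpr (by linarith : (0 : ℝ) < κ)])
end
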